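/- arXiv:1407.5803 — 4 statements merged into one kernel-verified Lean document; each statement's English description precedes it below -/
import Mathlib

section
/- Let X be a quandle and A an abelian group. If φ: X × X → A is a quandle 2-cocycle (i.e., φ(x,y) − φ(x,z) + φ(x*y,z) − φ(x*z,y*z) = 0 for all x,y,z ∈ X and φ(x,x) = 0 for all x ∈ X), then the set E = X × A with operation (x,a)*(y,b) = (x*y, a + φ(x,y)) is a quandle. -/
/-- A binary operation is a quandle operation: idempotent, right translations
bijective (unique division), and right self-distributive. -/
def IsQuandle {X : Type*} (op : X → X → X) : Prop :=
  (∀ a, op a a = a) ∧ (∀ b c, ∃! a, op a b = c) ∧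
  (∀ a b c, op (op a b) c = op (op a c) (op b c))

/-- A quandle 2-cocycle with values in an abelian group `A`. -/
def IsQuandleCocycle {X A : Type*} [AddCommGroup A]
    (op : X → X → X) (φ : X → X → A) : Prop :=
  (∀ x y z, φ x y - φ x z + φ (op x y) z - φ (op x z) (op y z) = 0) ∧
  (∀ x, φ x x = 0)

/-- The operation of the abelian extension `E(X, A, φ)` on `X × A`. -/
def extOp {X A : Type*} [AddCommGroup A] (op : X → X → X) (φ : X → X → A) :
    X × A → X × A → X × A :=
  fun p q => (op p.1 q.1, p.2 + φ p.1 q.1)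

/-- the abelian extension of a quandle by a 2-cocycle is a quandle. -/
theorem abelian_extension_isQuandle {X A : Type*} [AddCommGroup A]
    (op : X → X → X) (hQ : IsQuandle op)
    (φ : X → X → A) (hφ : IsQuandleCocycle op φ) :
    IsQuandle (extOp op φ) := by
  obtain ⟨hid, hdiv, hdist⟩ := hQ
  obtain ⟨hcoc, hdiag⟩ := hφ
  refine ⟨?_, ?_, ?_⟩
  · rintro ⟨x, a⟩
    simp [extOp, hid, hdiag]
  · rintro ⟨y, b⟩ ⟨z, c⟩
    obtain ⟨x, hx, hxu⟩ := hdiv y z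
    refine ⟨(x, c - φ x y), ?_, ?_⟩
    · simp [extOp, hx]
    · rintro ⟨x', a'⟩ h
      simp only [extOp, Prod.mk.injEq] at h
      obtain ⟨h1, h2⟩ := h
      have hx' : x' = x := hxu x' h1
      subst hx'
      exact Prod.ext rfl (by rw [← h2, add_sub_cancel_right])
  · rintro ⟨x, a⟩ ⟨y, b⟩ ⟨z, c⟩
    simp only [extOp, Prod.mk.injEq]
    refine ⟨hdist x y z, ?_⟩
    have h := hcoc x y z
    have h' : φ x y + φ (op x y) z = φ x z + φ (op x z) (op y z) := by
      rw [← sub_eq_zero, ← h]; abel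
    rw [add_assoc, add_assoc, h']
end

section
/- Let X be a kei (involutory quandle), A an abelian group, φ a quandle 2-cocycle on X with values in A, and E = E(X,A,φ) the abelian extension quandle on X × A with operation (x,a)*(y,b) = (x*y, a + φ(x,y)). Then E is a kei if and only if φ(x,y) + φ(x*y, y) = 0 in A for all x,y ∈ X. -/
/-- the abelian extension of a kei is a kei iff
`φ(x,y) + φ(x*y,y) = 0` for all `x, y`. -/
theorem abelian_extension_kei_iff {X A : Type*} [AddCommGroup A]
    (op : X → X → X) (hQ : IsQuandle op)
    (hkei : ∀ x y, op (op x y) y = x)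
    (φ : X → X → A) (hφ : IsQuandleCocycle op φ) :
    (∀ p q : X × A, extOp op φ (extOp op φ p q) q = p) ↔
      (∀ x y, φ x y + φ (op x y) y = 0) := by
  constructor
  · intro h x y
    have := h (x, 0) (y, 0)
    simp [extOp, Prod.ext_iff, add_assoc] at this
    exact this.2
  · intro h p q
    simp [extOp, Prod.ext_iff, hkei, add_assoc, h p.1 q.1]
end

section
/- Let X be a quandle, let 0 → C → A → B → 0 be a short exact sequence of abelian groups with inclusion ι: C → A and projection p_B: A → B admitting a section s: B → A (i.e., p_B ∘ s = id_B), and let φ: X × X → A be a quandle 2-cocycle. Then p_B ∘ φ is a quandle 2-cocycle on X with values in B, and E(X, A, φ) is isomorphic as a quandle to E(E(X, B, p_B∘φ), C, φ'), where φ'((x₁,b₁),(x₂,b₂)) = p_C(φ(x₁,x₂)) − η(b₁, p_B(φ(x₁,x₂))), with p_C: A → C and η: B × B → C defined by ι(p_C(a)) = a − s(p_B(a)) and ι(η(b₁,b₂)) = s(b₁+b₂) − s(b₁) − s(b₂). -/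
/-- given a short exact sequence `0 → C → A → B → 0` with a
set-theoretic section `s` of `p_B`, an `A`-valued 2-cocycle `φ` on `X` pushes
forward to a `B`-valued 2-cocycle `p_B ∘ φ`, and `E(X,A,φ)` is isomorphic to
the iterated extension `E(E(X,B,p_B∘φ), C, φ')`. -/
theorem extension_exact_sequence {X A B C : Type*}
    [AddCommGroup A] [AddCommGroup B] [AddCommGroup C]
    (op : X → X → X) (hQ : IsQuandle op)
    (ι : C →+ A) (pB : A →+ B)
    (hι : Function.Injective ι) (hpB : Function.Surjective pB)
    (hexact : Set.range ι = {a : A | pB a = 0})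
    (s : B → A) (hs : ∀ b, pB (s b) = b)
    (pC : A → C) (hpC : ∀ a, ι (pC a) = a - s (pB a))
    (η : B → B → C) (hη : ∀ b₁ b₂, ι (η b₁ b₂) = s (b₁ + b₂) - s b₁ - s b₂)
    (φ : X → X → A) (hφ : IsQuandleCocycle op φ) :
    IsQuandleCocycle op (fun x y => pB (φ x y)) ∧
    ∃ f : X × A ≃ (X × B) × C,
      ∀ p q, f (extOp op φ p q) =
        extOp (extOp op (fun x y => pB (φ x y)))
          (fun p₁ p₂ : X × B =>
            pC (φ p₁.1 p₂.1) - η p₁.2 (pB (φ p₁.1 p₂.1)))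
          (f p) (f q) := by
  obtain ⟨h1, h2⟩ := hφ
  refine ⟨⟨fun x y z => ?_, fun x => ?_⟩, ?_⟩
  · have := congrArg pB (h1 x y z)
    simpa using this
  · simp [h2 x]
  · refine ⟨⟨fun p => ((p.1, pB p.2), pC p.2),
      fun q => (q.1.1, s q.1.2 + ι q.2), ?_, ?_⟩, ?_⟩
    · intro ⟨x, a⟩
      simp only
      congr 1
      rw [hpC]; abel
    · intro ⟨⟨x, b⟩, c⟩
      simp only [Prod.mk.injEq]
      refine ⟨⟨trivial, ?_⟩, ?_⟩
      · simp [hs, map_add]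
        have : pB (ι c) = 0 := by
          have : ι c ∈ Set.range ι := ⟨c, rfl⟩
          rw [hexact] at this; exact this
        simp [this, hs]
      · apply hι
        rw [hpC]
        have hb : pB (s b + ι c) = b := by
          have h0 : pB (ι c) = 0 := by
            have : ι c ∈ Set.range ι := ⟨c, rfl⟩
            rw [hexact] at this; exact this
          simp [map_add, hs, h0]
        rw [hb]; abel
    · intro ⟨x, a⟩ ⟨y, a'⟩
      simp only [extOp, Equiv.coe_fn_mk, Prod.mk.injEq]
      refine ⟨⟨trivial, by simp [map_add]⟩, ?_⟩
      apply hι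
      rw [hpC]
      simp only [map_sub, map_add, hpC, hη]
      abel
end

section
/- Let G act on a set S of oriented knots by the Klein four-group 𝒢 = {1, r, m, rm} where r reverses orientation and m takes mirror image. Assume connected sum is compatible: f(K₁ # K₂) = f(K₁) # f(K₂) for all f ∈ 𝒢, that f(P) is prime when P is prime, and that prime factorization of knots is unique. If K = P₁ # ... # P_n is a prime factorization, f ∈ 𝒢 with K ≠ f(K), and P is a prime knot with P ∉ 𝒢(P_i) for all i and P ≠ rm(P), then P # K ≠ P # f(K) and rm(P # K) ≠ P # f(K). -/
/-- the unique-factorization argument distinguishing `P # K`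
from `P # f(K)` and `rm(P # K)` from `P # f(K)`. Oriented knots under
connected sum are modeled by a commutative monoid `M` with unique
factorization into primes (`Prim`), acted on by the Klein four-group
`𝒢 = {1, r, m, r*m}` (a group `G` of exponent two generated by `r` and `m`)
via monoid automorphisms taking primes to primes. -/
theorem composite_knots_distinguished {M : Type*} [CommMonoid M]
    (Prim : M → Prop)
    (hUF : ∀ l₁ l₂ : Multiset M, (∀ p ∈ l₁, Prim p) → (∀ p ∈ l₂, Prim p) →
      l₁.prod = l₂.prod → l₁ = l₂)
    {G : Type*} [Group G] (r m : G)
    (hexp : ∀ g : G, g * g = 1)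
    (hgen : ∀ g : G, g = 1 ∨ g = r ∨ g = m ∨ g = r * m)
    (act : G →* MulAut M)
    (hprim : ∀ (g : G) (p : M), Prim p → Prim (act g p))
    (Ps : Multiset M) (hPs : ∀ p ∈ Ps, Prim p)
    (K : M) (hK : K = Ps.prod)
    (f : G) (hfK : act f K ≠ K)
    (P : M) (hP : Prim P)
    (horb : ∀ p ∈ Ps, ∀ g : G, act g p ≠ P)
    (hPrm : act (r * m) P ≠ P) :
    P * K ≠ P * act f K ∧ act (r * m) (P * K) ≠ P * act f K := by
  have key : ∀ g : G, (Ps.map (act g)).prod = act g K := by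
    intro g
    rw [hK]
    exact (map_multiset_prod (act g : M ≃* M) Ps).symm
  have keyprim : ∀ g : G, ∀ p ∈ Ps.map (act g), Prim p := by
    intro g p hp
    obtain ⟨q, hq, rfl⟩ := Multiset.mem_map.1 hp
    exact hprim g q (hPs q hq)
  have consprim : ∀ (q : M) (L : Multiset M), Prim q → (∀ p ∈ L, Prim p) →
      ∀ p ∈ q ::ₘ L, Prim p := by
    intro q L hq hL p hp
    rcases Multiset.mem_cons.1 hp with rfl | hp
    · exact hq
    · exact hL p hp
  constructor
  · intro h
    have h1 : (P ::ₘ Ps).prod = (P ::ₘ Ps.map (act f)).prod := by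
      rw [Multiset.prod_cons, Multiset.prod_cons, key, ← hK, h]
    have h2 := hUF _ _ (consprim P Ps hP hPs) (consprim P _ hP (keyprim f)) h1
    have h3 : Ps = Ps.map (act f) := (Multiset.cons_inj_right P).1 h2
    apply hfK
    rw [← key f, ← h3, ← hK]
  · intro h
    have h1 : (act (r*m) P ::ₘ Ps.map (act (r*m))).prod = (P ::ₘ Ps.map (act f)).prod := by
      rw [Multiset.prod_cons, Multiset.prod_cons, key, key, ← map_mul, h]
    have h2 := hUF _ _ (consprim _ _ (hprim _ _ hP) (keyprim (r*m)))
      (consprim P _ hP (keyprim f)) h1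
    have hmem : P ∈ act (r*m) P ::ₘ Ps.map (act (r*m)) := by
      rw [h2]; exact Multiset.mem_cons_self _ _
    rcases Multiset.mem_cons.1 hmem with he | hmem
    · exact hPrm he.symm
    · obtain ⟨q, hq, hqe⟩ := Multiset.mem_map.1 hmem
      exact horb q hq (r*m) hqe
end
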